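/- For any DM-TWC, C_O ⊆ closure( convexHull( ⋃_{(R₁',R₂') ∈ C_I} {(R₁',R₂')} ∪ {(R₁'+α*, R₂'+2β*)} ) ) ∩ C̃_O, where C̃_O = [0, I*₁] × [0, I*₂] is the trivial outer bound. -/
import Mathlib


open scoped BigOperators

/-- `P` is a probability distribution on the finite alphabet `A`. -/
def IsDist {A : Type*} [Fintype A] (P : A → ℝ) : Prop :=
  (∀ a, 0 ≤ P a) ∧ ∑ a, P a = 1

/-- Input–output mutual information 𝓘(P, W) (in bits) of a channel `W`
from the finite alphabet `A` to the finite alphabet `B` under input distribution `P`. -/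
noncomputable def mutInfo {A B : Type*} [Fintype A] [Fintype B]
    (P : A → ℝ) (W : A → B → ℝ) : ℝ :=
  ∑ a, ∑ b, P a * W a b * Real.logb 2 (W a b / ∑ a', P a' * W a' b)

/-- Shannon entropy (base 2) of a distribution on a finite alphabet. -/
noncomputable def ent {B : Type*} [Fintype B] (Q : B → ℝ) : ℝ :=
  -∑ b, Q b * Real.logb 2 (Q b)

section Core
variable {ι A B : Type*} [Fintype ι] [Fintype A] [Fintype B]

lemma ent_eq (Q : B → ℝ) : ent Q = (∑ b, Real.negMulLog (Q b)) / Real.log 2 := by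
  rw [ent]
  rw [Finset.sum_congr rfl (fun b _ => show Q b * Real.logb 2 (Q b)
      = (Q b * Real.log (Q b)) / Real.log 2 from by rw [Real.logb]; ring)]
  rw [← Finset.sum_div, ← neg_div]
  congr 1
  rw [← Finset.sum_neg_distrib]
  exact Finset.sum_congr rfl (fun b _ => by rw [Real.negMulLog]; ring)

lemma sum_negMulLog_mix (w : ι → ℝ) (Q : ι → B → ℝ) (hw : ∀ i, 0 ≤ w i)
    (hw1 : ∑ i, w i = 1) (hQ : ∀ i b, 0 ≤ Q i b) :
    ∑ i, w i * (∑ b, Real.negMulLog (Q i b)) ≤ ∑ b, Real.negMulLog (∑ i, w i * Q i b) := by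
  have : ∑ i, w i * (∑ b, Real.negMulLog (Q i b))
      = ∑ b, ∑ i, w i * Real.negMulLog (Q i b) := by
    rw [Finset.sum_comm]
    exact Finset.sum_congr rfl (fun i _ => Finset.mul_sum _ _ _)
  rw [this]
  apply Finset.sum_le_sum
  intro b _
  have := Real.concaveOn_negMulLog.le_map_sum (t := Finset.univ) (w := w)
    (p := fun i => Q i b) (fun i _ => hw i) hw1 (fun i _ => hQ i b)
  simpa [smul_eq_mul] using this

lemma ent_mix (w : ι → ℝ) (Q : ι → B → ℝ) (hw : ∀ i, 0 ≤ w i)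
    (hw1 : ∑ i, w i = 1) (hQ : ∀ i b, 0 ≤ Q i b) :
    ∑ i, w i * ent (Q i) ≤ ent (fun b => ∑ i, w i * Q i b) := by
  simp only [ent_eq]
  rw [Finset.sum_congr rfl (fun i _ => show
      w i * ((∑ b, Real.negMulLog (Q i b)) / Real.log 2)
      = (w i * ∑ b, Real.negMulLog (Q i b)) / Real.log 2 from (mul_div_assoc _ _ _).symm)]
  rw [← Finset.sum_div]
  have h2 : (0:ℝ) < Real.log 2 := Real.log_pos one_lt_two
  exact div_le_div_of_nonneg_right (sum_negMulLog_mix w Q hw hw1 hQ) h2.le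

lemma mutInfo_decomp (P : A → ℝ) (W : A → B → ℝ) (hP : ∀ a, 0 ≤ P a)
    (hW : ∀ a b, 0 ≤ W a b) :
    mutInfo P W = ent (fun b => ∑ a, P a * W a b) - ∑ a, P a * ent (W a) := by
  have key : ∀ a b, P a * W a b * Real.logb 2 (W a b / ∑ a', P a' * W a' b)
      = P a * W a b * Real.logb 2 (W a b)
        - P a * W a b * Real.logb 2 (∑ a', P a' * W a' b) := by
    intro a b
    by_cases h : P a * W a b = 0
    · simp [h]
    · have hWab : W a b ≠ 0 := fun h0 => h (by rw [h0, mul_zero])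
      have hpos : 0 < P a * W a b :=
        lt_of_le_of_ne (mul_nonneg (hP a) (hW a b)) (Ne.symm h)
      have hQpos : 0 < ∑ a', P a' * W a' b :=
        lt_of_lt_of_le hpos (Finset.single_le_sum
          (fun a' _ => mul_nonneg (hP a') (hW a' b)) (Finset.mem_univ a))
      rw [Real.logb_div hWab (ne_of_gt hQpos), mul_sub]
  rw [mutInfo]
  rw [Finset.sum_congr rfl (fun a _ => Finset.sum_congr rfl (fun b _ => key a b))]
  simp only [Finset.sum_sub_distrib]
  have h1 : ∑ a, ∑ b, P a * W a b * Real.logb 2 (W a b) = -∑ a, P a * ent (W a) := by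
    rw [← Finset.sum_neg_distrib]
    apply Finset.sum_congr rfl
    intro a _
    rw [ent, mul_neg, neg_neg, Finset.mul_sum]
    exact Finset.sum_congr rfl (fun b _ => by ring)
  have h2 : ∑ a, ∑ b, P a * W a b * Real.logb 2 (∑ a', P a' * W a' b)
      = -(ent (fun b => ∑ a, P a * W a b)) := by
    rw [Finset.sum_comm, ent, neg_neg]
    apply Finset.sum_congr rfl
    intro b _
    rw [← Finset.sum_mul]
  rw [h1, h2]
  ring

lemma mutInfo_mix (w : ι → ℝ) (P : ι → A → ℝ) (W : A → B → ℝ)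
    (hw : ∀ i, 0 ≤ w i) (hw1 : ∑ i, w i = 1)
    (hP : ∀ i a, 0 ≤ P i a) (hW : ∀ a b, 0 ≤ W a b) :
    ∑ i, w i * mutInfo (P i) W ≤ mutInfo (fun a => ∑ i, w i * P i a) W := by
  rw [mutInfo_decomp _ W (fun a => Finset.sum_nonneg fun i _ =>
    mul_nonneg (hw i) (hP i a)) hW]
  rw [Finset.sum_congr rfl (fun i _ => by
    rw [mutInfo_decomp (P i) W (hP i) hW])]
  have hswap : ∀ (f : A → ℝ), ∑ a, (∑ i, w i * P i a) * f a
      = ∑ i, w i * ∑ a, P i a * f a := by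
    intro f
    simp only [Finset.sum_mul, Finset.mul_sum, mul_assoc]
    exact Finset.sum_comm
  have hmixout : (fun b => ∑ a, (∑ i, w i * P i a) * W a b)
      = fun b => ∑ i, w i * ∑ a, P i a * W a b := by
    funext b; exact hswap (fun a => W a b)
  simp only [mul_sub]
  rw [Finset.sum_sub_distrib, hmixout, hswap (fun a => ent (W a))]
  apply sub_le_sub_right
  exact ent_mix w (fun i b => ∑ a, P i a * W a b) hw hw1
    (fun i b => Finset.sum_nonneg fun a _ => mul_nonneg (hP i a) (hW a b))


lemma mutInfo_delta [DecidableEq A] (i : A) (W : A → B → ℝ) :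
    mutInfo (fun a => if a = i then (1:ℝ) else 0) W = 0 := by
  rw [mutInfo]
  apply Finset.sum_eq_zero
  intro a _
  by_cases ha : a = i
  · subst ha
    apply Finset.sum_eq_zero
    intro b _
    have hden : (∑ a', (if a' = a then (1:ℝ) else 0) * W a' b) = W a b := by
      simp
    rw [hden]
    by_cases h : W a b = 0
    · simp [h]
    · simp [div_self h]
  · simp [ha]

lemma mutInfo_nonneg (P : A → ℝ) (W : A → B → ℝ) (hP : IsDist P)
    (hW : ∀ a b, 0 ≤ W a b) : 0 ≤ mutInfo P W := by
  classical
  have := mutInfo_mix P (fun i a => if a = i then (1:ℝ) else 0) W hP.1 hP.2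
    (fun i a => by by_cases h : a = i <;> simp [h]) hW
  simp only [mutInfo_delta, mul_zero, Finset.sum_const_zero] at this
  convert this using 2
  funext a
  simp only [mul_ite, mul_one, mul_zero, Finset.sum_ite_eq, Finset.mem_univ, if_true]

lemma ent_nonneg (Q : B → ℝ) (hQ : IsDist Q) : 0 ≤ ent Q := by
  rw [ent, neg_nonneg]
  apply Finset.sum_nonpos
  intro b _
  have hle : Q b ≤ 1 := by
    rw [← hQ.2]
    exact Finset.single_le_sum (fun b' _ => hQ.1 b') (Finset.mem_univ b)
  exact mul_nonpos_of_nonneg_of_nonpos (hQ.1 b)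
    (Real.logb_nonpos one_lt_two (hQ.1 b) hle)

lemma ent_le_log_card [Nonempty B] (Q : B → ℝ) (hQ : IsDist Q) :
    ent Q ≤ Real.logb 2 (Fintype.card B) := by
  have hN : (0:ℝ) < (Fintype.card B : ℝ) := by
    exact_mod_cast Fintype.card_pos
  have key : ∀ b, Real.negMulLog (Q b)
      ≤ Q b * Real.log (Fintype.card B) + ((Fintype.card B : ℝ)⁻¹ - Q b) := by
    intro b
    rcases eq_or_lt_of_le (hQ.1 b) with h | h
    · rw [← h]
      simp [Real.negMulLog_zero, inv_nonneg, hN.le]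
    · have hc : (0:ℝ) < ((Fintype.card B : ℝ)⁻¹ / Q b) := by positivity
      have hlog := Real.log_le_sub_one_of_pos hc
      have : Q b * Real.log ((Fintype.card B : ℝ)⁻¹ / Q b)
          ≤ (Fintype.card B : ℝ)⁻¹ - Q b := by
        calc Q b * Real.log ((Fintype.card B : ℝ)⁻¹ / Q b)
            ≤ Q b * ((Fintype.card B : ℝ)⁻¹ / Q b - 1) :=
              mul_le_mul_of_nonneg_left hlog h.le
          _ = (Fintype.card B : ℝ)⁻¹ - Q b := by field_simp
      have hexp : Real.log ((Fintype.card B : ℝ)⁻¹ / Q b)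
          = -Real.log (Fintype.card B) - Real.log (Q b) := by
        rw [Real.log_div (by positivity) (ne_of_gt h), Real.log_inv]
      rw [hexp] at this
      rw [Real.negMulLog]
      nlinarith
  have hsum : ∑ b, Real.negMulLog (Q b) ≤ Real.log (Fintype.card B) := by
    calc ∑ b, Real.negMulLog (Q b)
        ≤ ∑ b, (Q b * Real.log (Fintype.card B) + ((Fintype.card B : ℝ)⁻¹ - Q b)) :=
          Finset.sum_le_sum (fun b _ => key b)
      _ = Real.log (Fintype.card B) := by
          rw [Finset.sum_add_distrib, ← Finset.sum_mul, hQ.2, Finset.sum_sub_distrib,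
            hQ.2, Finset.sum_const, Finset.card_univ, nsmul_eq_mul,
            mul_inv_cancel₀ (ne_of_gt hN)]
          ring
  rw [ent_eq, Real.logb]
  exact div_le_div_of_nonneg_right hsum (Real.log_pos one_lt_two).le

lemma mutInfo_le_log_card (P : A → ℝ) (W : A → B → ℝ) (hP : IsDist P)
    (hW : ∀ a, IsDist (W a)) : mutInfo P W ≤ Real.logb 2 (Fintype.card B) := by
  have hB : Nonempty B := by
    by_contra h
    rw [not_nonempty_iff] at h
    have hA : Nonempty A := by
      by_contra hA
      rw [not_nonempty_iff] at hA
      have := hP.2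
      rw [Finset.univ_eq_empty, Finset.sum_empty] at this
      norm_num at this
    have := (hW (Classical.arbitrary A)).2
    rw [Finset.univ_eq_empty, Finset.sum_empty] at this
    norm_num at this
  rw [mutInfo_decomp P W hP.1 (fun a b => (hW a).1 b)]
  have hQdist : IsDist (fun b => ∑ a, P a * W a b) := by
    constructor
    · exact fun b => Finset.sum_nonneg fun a _ => mul_nonneg (hP.1 a) ((hW a).1 b)
    · rw [Finset.sum_comm]
      rw [Finset.sum_congr rfl (fun a _ => by rw [← Finset.mul_sum, (hW a).2, mul_one])]
      exact hP.2
  have h1 := ent_le_log_card _ hQdist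
  have h2 : 0 ≤ ∑ a, P a * ent (W a) :=
    Finset.sum_nonneg fun a _ => mul_nonneg (hP.1 a) (ent_nonneg _ (hW a))
  linarith

end Core

lemma isDist_delta {A : Type*} [Fintype A] [DecidableEq A] (i : A) :
    IsDist (fun a => if a = i then (1:ℝ) else 0) := by
  constructor
  · intro a; by_cases h : a = i <;> simp [h]
  · simp

lemma isDist_unif {A : Type*} [Fintype A] [Nonempty A] :
    IsDist (fun _ : A => (Fintype.card A : ℝ)⁻¹) := by
  constructor
  · intro a; positivity
  · rw [Finset.sum_const, Finset.card_univ, nsmul_eq_mul, mul_inv_cancel₀]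
    exact Nat.cast_ne_zero.mpr Fintype.card_ne_zero

lemma convex_comb2 {C : Set (ℝ × ℝ)} (hC : Convex ℝ C) {p q : ℝ × ℝ}
    (hp : p ∈ C) (hq : q ∈ C) {μ : ℝ} (h0 : 0 ≤ μ) (h1 : μ ≤ 1) :
    (μ * p.1 + (1 - μ) * q.1, μ * p.2 + (1 - μ) * q.2) ∈ C := by
  have h := hC hp hq h0 (sub_nonneg.mpr h1) (by ring : μ + (1 - μ) = 1)
  have he : (μ * p.1 + (1 - μ) * q.1, μ * p.2 + (1 - μ) * q.2)
      = μ • p + (1 - μ) • q := by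
    rw [Prod.ext_iff]
    constructor <;> simp [smul_eq_mul]
  rw [he]; exact h


section TWC

variable {X1 X2 Y1 Y2 : Type*} [Fintype X1] [Fintype X2] [Fintype Y1] [Fintype Y2]

/-- A joint input distribution on `X1 × X2`. -/
def IsJointDist (P : X1 → X2 → ℝ) : Prop :=
  (∀ x1 x2, 0 ≤ P x1 x2) ∧ ∑ x1, ∑ x2, P x1 x2 = 1

/-- Marginal of a joint input distribution on `X1`. -/
noncomputable def margin1 (P : X1 → X2 → ℝ) (x1 : X1) : ℝ := ∑ x2, P x1 x2

/-- Marginal of a joint input distribution on `X2`. -/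
noncomputable def margin2 (P : X1 → X2 → ℝ) (x2 : X2) : ℝ := ∑ x1, P x1 x2

/-- Conditional distribution P_{X₁|X₂=x₂}. -/
noncomputable def cond1given2 (P : X1 → X2 → ℝ) (x2 : X2) (x1 : X1) : ℝ :=
  P x1 x2 / margin2 P x2

/-- Conditional distribution P_{X₂|X₁=x₁}. -/
noncomputable def cond2given1 (P : X1 → X2 → ℝ) (x1 : X1) (x2 : X2) : ℝ :=
  P x1 x2 / margin1 P x1

/-- The conditional mutual information I(X₁;Y₂|X₂) under the joint input distribution `P`,
where `W2` is the marginal channel P_{Y₂|X₁,X₂}. -/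
noncomputable def condMI12 (P : X1 → X2 → ℝ) (W2 : X1 → X2 → Y2 → ℝ) : ℝ :=
  ∑ x2, margin2 P x2 * mutInfo (cond1given2 P x2) (fun x1 => W2 x1 x2)

/-- The conditional mutual information I(X₂;Y₁|X₁) under the joint input distribution `P`,
where `W1` is the marginal channel P_{Y₁|X₁,X₂}. -/
noncomputable def condMI21 (P : X1 → X2 → ℝ) (W1 : X1 → X2 → Y1 → ℝ) : ℝ :=
  ∑ x1, margin1 P x1 * mutInfo (cond2given1 P x1) (fun x2 => W1 x1 x2)

/-- The rate region 𝓡(P_{X₁,X₂}). -/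
noncomputable def rateRegion (W1 : X1 → X2 → Y1 → ℝ) (W2 : X1 → X2 → Y2 → ℝ)
    (P : X1 → X2 → ℝ) : Set (ℝ × ℝ) :=
  {r | 0 ≤ r.1 ∧ r.1 ≤ condMI12 P W2 ∧ 0 ≤ r.2 ∧ r.2 ≤ condMI21 P W1}

/-- Shannon's inner bound C_I: the closure of the convex hull of the union of the
rate regions of all product input distributions. -/
noncomputable def innerBound (W1 : X1 → X2 → Y1 → ℝ) (W2 : X1 → X2 → Y2 → ℝ) :
    Set (ℝ × ℝ) :=
  closure (convexHull ℝ
    (⋃ P ∈ {P : X1 → X2 → ℝ |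
        ∃ P1 P2, IsDist P1 ∧ IsDist P2 ∧ P = fun x1 x2 => P1 x1 * P2 x2},
      rateRegion W1 W2 P))

/-- Shannon's outer bound C_O: the union of the rate regions of all joint input
distributions. -/
noncomputable def outerBound (W1 : X1 → X2 → Y1 → ℝ) (W2 : X1 → X2 → Y2 → ℝ) :
    Set (ℝ × ℝ) :=
  ⋃ P ∈ {P : X1 → X2 → ℝ | IsJointDist P}, rateRegion W1 W2 P

/-- The largest input–output mutual information of the one-way channel
P_{Y₂|X₁,X₂=x₂}. -/
noncomputable def capAt (W2 : X1 → X2 → Y2 → ℝ) (x2 : X2) : ℝ :=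
  sSup {I | ∃ P : X1 → ℝ, IsDist P ∧ I = mutInfo P (fun x1 => W2 x1 x2)}

/-- α*: how close the channels {P_{Y₂|X₁,X₂=x₂}} are to having a common optimal
input distribution. -/
noncomputable def alphaStar (W2 : X1 → X2 → Y2 → ℝ) : ℝ :=
  sInf {a | ∃ Pt : X1 → ℝ, IsDist Pt ∧
    a = ⨆ x2, |mutInfo Pt (fun x1 => W2 x1 x2) - capAt W2 x2|}

/-- β*: the degree of invariance in the input–output mutual information of the
channels {P_{Y₁|X₁=x₁,X₂}}. -/
noncomputable def betaStar (W1 : X1 → X2 → Y1 → ℝ) : ℝ :=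
  sSup {b | ∃ (P : X2 → ℝ) (x1 x1' : X1), IsDist P ∧ x1 ≠ x1' ∧
    b = |mutInfo P (fun x2 => W1 x1 x2) - mutInfo P (fun x2 => W1 x1' x2)|}

/-- I*₁ = max_{x₂} max_{P} 𝓘(P, P_{Y₂|X₁,X₂=x₂}). -/
noncomputable def IStar1 (W2 : X1 → X2 → Y2 → ℝ) : ℝ :=
  sSup {I | ∃ (x2 : X2) (P : X1 → ℝ), IsDist P ∧ I = mutInfo P (fun x1 => W2 x1 x2)}

/-- I*₂ = max_{x₁} max_{P} 𝓘(P, P_{Y₁|X₁=x₁,X₂}). -/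
noncomputable def IStar2 (W1 : X1 → X2 → Y1 → ℝ) : ℝ :=
  sSup {I | ∃ (x1 : X1) (P : X2 → ℝ), IsDist P ∧ I = mutInfo P (fun x2 => W1 x1 x2)}

/-- Condition (a): `Pstar` is a common optimal input distribution for the channels
{P_{Y₂|X₁,X₂=x₂} : x₂ ∈ 𝒳₂}. -/
def CondA (W2 : X1 → X2 → Y2 → ℝ) (Pstar : X1 → ℝ) : Prop :=
  IsDist Pstar ∧ ∀ x2 : X2, ∀ P : X1 → ℝ, IsDist P →
    mutInfo P (fun x1 => W2 x1 x2) ≤ mutInfo Pstar (fun x1 => W2 x1 x2)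

/-- Condition (b1): for every input distribution on 𝒳₂, the input–output mutual
information of P_{Y₁|X₁=x₁,X₂} does not depend on x₁. -/
def CondB1 (W1 : X1 → X2 → Y1 → ℝ) : Prop :=
  ∀ P : X2 → ℝ, IsDist P → ∀ x1 x1' : X1,
    mutInfo P (fun x2 => W1 x1 x2) = mutInfo P (fun x2 => W1 x1' x2)

/-- H(Y₁|X₁,X₂) under the joint input distribution `P`. -/
noncomputable def condEntFull (P : X1 → X2 → ℝ) (W1 : X1 → X2 → Y1 → ℝ) : ℝ :=
  ∑ x1, ∑ x2, P x1 x2 * ent (W1 x1 x2)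

/-- H(Y₁|X₁) under the joint input distribution `P`. -/
noncomputable def condEntY1X1 (P : X1 → X2 → ℝ) (W1 : X1 → X2 → Y1 → ℝ) : ℝ :=
  ∑ x1, margin1 P x1 * ent (fun y1 => ∑ x2, cond2given1 P x1 x2 * W1 x1 x2 y1)

/-- Condition (b2), part (i): H(Y₁|X₁,X₂) depends on the joint input distribution
only through its marginal on 𝒳₂. -/
def CondB2i (W1 : X1 → X2 → Y1 → ℝ) : Prop :=
  ∀ P Q : X1 → X2 → ℝ, IsJointDist P → IsJointDist Q →
    margin2 P = margin2 Q → condEntFull P W1 = condEntFull Q W1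

/-- Condition (b2), part (ii), relative to the common optimal input `Pstar`:
H⁽¹⁾(Y₁|X₁) ≤ H⁽²⁾(Y₁|X₁) where P⁽²⁾ = P*_{X₁}·P⁽¹⁾_{X₂}. -/
def CondB2ii (W1 : X1 → X2 → Y1 → ℝ) (Pstar : X1 → ℝ) : Prop :=
  ∀ P : X1 → X2 → ℝ, IsJointDist P →
    condEntY1X1 P W1 ≤ condEntY1X1 (fun x1 x2 => Pstar x1 * margin2 P x2) W1



lemma margin1_isDist (P : X1 → X2 → ℝ) (hP : IsJointDist P) : IsDist (margin1 P) := by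
  constructor
  · intro x1; exact Finset.sum_nonneg fun x2 _ => hP.1 x1 x2
  · simp only [margin1]; exact hP.2

lemma margin2_isDist (P : X1 → X2 → ℝ) (hP : IsJointDist P) : IsDist (margin2 P) := by
  constructor
  · intro x2; exact Finset.sum_nonneg fun x1 _ => hP.1 x1 x2
  · simp only [margin2]; rw [Finset.sum_comm]; exact hP.2

lemma cond1given2_isDist (P : X1 → X2 → ℝ) (hP : IsJointDist P) (x2 : X2)
    (h : margin2 P x2 ≠ 0) : IsDist (cond1given2 P x2) := by
  constructor
  · intro x1
    exact div_nonneg (hP.1 x1 x2) (Finset.sum_nonneg fun x1' _ => hP.1 x1' x2)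
  · simp only [cond1given2]
    rw [← Finset.sum_div]
    exact div_self h

lemma cond2given1_isDist (P : X1 → X2 → ℝ) (hP : IsJointDist P) (x1 : X1)
    (h : margin1 P x1 ≠ 0) : IsDist (cond2given1 P x1) := by
  constructor
  · intro x2
    exact div_nonneg (hP.1 x1 x2) (Finset.sum_nonneg fun x2' _ => hP.1 x1 x2')
  · simp only [cond2given1]
    rw [← Finset.sum_div]
    exact div_self h

lemma cond2given1_nonneg (P : X1 → X2 → ℝ) (hP : IsJointDist P) (x1 : X1) (x2 : X2) :
    0 ≤ cond2given1 P x1 x2 :=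
  div_nonneg (hP.1 x1 x2) (Finset.sum_nonneg fun x2' _ => hP.1 x1 x2')

lemma margin1_zero (P : X1 → X2 → ℝ) (hP : IsJointDist P) (x1 : X1)
    (h : margin1 P x1 = 0) (x2 : X2) : P x1 x2 = 0 := by
  have := (Finset.sum_eq_zero_iff_of_nonneg (fun x2' _ => hP.1 x1 x2')).mp h
  exact this x2 (Finset.mem_univ x2)

lemma mix_cond2given1 (P : X1 → X2 → ℝ) (hP : IsJointDist P) (x2 : X2) :
    ∑ x1, margin1 P x1 * cond2given1 P x1 x2 = margin2 P x2 := by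
  rw [margin2]
  apply Finset.sum_congr rfl
  intro x1 _
  by_cases h : margin1 P x1 = 0
  · rw [h, zero_mul, margin1_zero P hP x1 h x2]
  · rw [cond2given1, mul_comm, div_mul_cancel₀ _ h]

lemma condMI12_prod (W2 : X1 → X2 → Y2 → ℝ) (P1 : X1 → ℝ) (P2 : X2 → ℝ)
    (h1 : ∑ x1, P1 x1 = 1) :
    condMI12 (fun x1 x2 => P1 x1 * P2 x2) W2
      = ∑ x2, P2 x2 * mutInfo P1 (fun x1 => W2 x1 x2) := by
  rw [condMI12]
  apply Finset.sum_congr rfl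
  intro x2 _
  have hm : margin2 (fun x1 x2 => P1 x1 * P2 x2) x2 = P2 x2 := by
    rw [margin2, ← Finset.sum_mul, h1, one_mul]
  rw [hm]
  by_cases h : P2 x2 = 0
  · rw [h, zero_mul, zero_mul]
  · have hc : cond1given2 (fun x1 x2 => P1 x1 * P2 x2) x2 = P1 := by
      funext x1
      rw [cond1given2, hm, mul_div_assoc, div_self h, mul_one]
    rw [hc]

lemma condMI21_prod (W1 : X1 → X2 → Y1 → ℝ) (P1 : X1 → ℝ) (P2 : X2 → ℝ)
    (h2 : ∑ x2, P2 x2 = 1) :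
    condMI21 (fun x1 x2 => P1 x1 * P2 x2) W1
      = ∑ x1, P1 x1 * mutInfo P2 (fun x2 => W1 x1 x2) := by
  rw [condMI21]
  apply Finset.sum_congr rfl
  intro x1 _
  have hm : margin1 (fun x1 x2 => P1 x1 * P2 x2) x1 = P1 x1 := by
    rw [margin1, ← Finset.mul_sum, h2, mul_one]
  rw [hm]
  by_cases h : P1 x1 = 0
  · rw [h, zero_mul, zero_mul]
  · have hc : cond2given1 (fun x1 x2 => P1 x1 * P2 x2) x1 = P2 := by
      funext x2
      rw [cond2given1, hm, mul_comm, mul_div_assoc, div_self h, mul_one]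
    rw [hc]

lemma mem_inner_horiz [Nonempty X1] [Nonempty X2]
    (W1 : X1 → X2 → Y1 → ℝ) (W2 : X1 → X2 → Y2 → ℝ)
    (hW1 : ∀ x1 x2, IsDist (W1 x1 x2)) (hW2 : ∀ x1 x2, IsDist (W2 x1 x2))
    {x : ℝ} (hx0 : 0 ≤ x) (hx1 : x ≤ IStar1 W2) :
    ((x, (0:ℝ)) : ℝ × ℝ) ∈ innerBound W1 W2 := by
  classical
  rw [innerBound, Metric.mem_closure_iff]
  intro δ hδ
  have hne : {I | ∃ (x2 : X2) (P : X1 → ℝ), IsDist P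
      ∧ I = mutInfo P (fun x1 => W2 x1 x2)}.Nonempty :=
    ⟨_, Classical.arbitrary X2, fun _ => (Fintype.card X1 : ℝ)⁻¹, isDist_unif, rfl⟩
  have hlt : x - δ/2 < IStar1 W2 := lt_of_lt_of_le (by linarith) hx1
  rw [IStar1] at hlt
  obtain ⟨I, hImem, hI⟩ := exists_lt_of_lt_csSup hne hlt
  obtain ⟨x2', P', hP', rfl⟩ := hImem
  have hQ12 : condMI12 (fun x1 x2 => P' x1 * (if x2 = x2' then 1 else 0)) W2
      = mutInfo P' (fun x1 => W2 x1 x2') := by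
    rw [condMI12_prod W2 P' _ hP'.2]
    simp
  have hQ21nn : 0 ≤ condMI21 (fun x1 x2 => P' x1 * (if x2 = x2' then 1 else 0)) W1 := by
    rw [condMI21_prod W1 P' _ (by simp : ∑ x2, (if x2 = x2' then (1:ℝ) else 0) = 1)]
    apply Finset.sum_nonneg
    intro x1 _
    exact mul_nonneg (hP'.1 x1)
      (mutInfo_nonneg _ _ (isDist_delta x2') (fun x2 y => (hW1 x1 x2).1 y))
  have hmutnn : 0 ≤ mutInfo P' (fun x1 => W2 x1 x2') :=
    mutInfo_nonneg _ _ hP' (fun a b => (hW2 a x2').1 b)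
  refine ⟨(min x (mutInfo P' (fun x1 => W2 x1 x2')), 0), ?_, ?_⟩
  · apply subset_convexHull
    have hQmem : (fun x1 x2 => P' x1 * (if x2 = x2' then 1 else 0)) ∈
        {P : X1 → X2 → ℝ | ∃ P1 P2, IsDist P1 ∧ IsDist P2
          ∧ P = fun x1 x2 => P1 x1 * P2 x2} :=
      ⟨P', fun x2 => if x2 = x2' then 1 else 0, hP', isDist_delta x2', rfl⟩
    exact Set.mem_biUnion hQmem
      ⟨le_min hx0 hmutnn, (min_le_right _ _).trans_eq hQ12.symm, le_refl 0, hQ21nn⟩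
  · have hd : dist ((x, (0:ℝ)) : ℝ × ℝ)
        ((min x (mutInfo P' (fun x1 => W2 x1 x2')), 0) : ℝ × ℝ)
        = |x - min x (mutInfo P' (fun x1 => W2 x1 x2'))| := by
      rw [Prod.dist_eq]
      simp [Real.dist_eq]
    rw [hd, abs_of_nonneg (by simp [min_le_left])]
    have h1 : x - δ/2 < min x (mutInfo P' (fun x1 => W2 x1 x2')) :=
      lt_min (by linarith) hI
    linarith

lemma mem_inner_vert [Nonempty X1] [Nonempty X2]
    (W1 : X1 → X2 → Y1 → ℝ) (W2 : X1 → X2 → Y2 → ℝ)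
    (hW1 : ∀ x1 x2, IsDist (W1 x1 x2)) (hW2 : ∀ x1 x2, IsDist (W2 x1 x2))
    {y : ℝ} (hy0 : 0 ≤ y) (hy1 : y ≤ IStar2 W1) :
    (((0:ℝ), y) : ℝ × ℝ) ∈ innerBound W1 W2 := by
  classical
  rw [innerBound, Metric.mem_closure_iff]
  intro δ hδ
  have hne : {I | ∃ (x1 : X1) (P : X2 → ℝ), IsDist P
      ∧ I = mutInfo P (fun x2 => W1 x1 x2)}.Nonempty :=
    ⟨_, Classical.arbitrary X1, fun _ => (Fintype.card X2 : ℝ)⁻¹, isDist_unif, rfl⟩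
  have hlt : y - δ/2 < IStar2 W1 := lt_of_lt_of_le (by linarith) hy1
  rw [IStar2] at hlt
  obtain ⟨I, hImem, hI⟩ := exists_lt_of_lt_csSup hne hlt
  obtain ⟨x1', P', hP', rfl⟩ := hImem
  have hQ21 : condMI21 (fun x1 x2 => (if x1 = x1' then 1 else 0) * P' x2) W1
      = mutInfo P' (fun x2 => W1 x1' x2) := by
    rw [condMI21_prod W1 _ P' hP'.2]
    simp
  have hQ12nn : 0 ≤ condMI12 (fun x1 x2 => (if x1 = x1' then 1 else 0) * P' x2) W2 := by
    rw [condMI12_prod W2 _ P' (by simp : ∑ x1, (if x1 = x1' then (1:ℝ) else 0) = 1)]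
    apply Finset.sum_nonneg
    intro x2 _
    exact mul_nonneg (hP'.1 x2)
      (mutInfo_nonneg _ _ (isDist_delta x1') (fun x1 y => (hW2 x1 x2).1 y))
  have hmutnn : 0 ≤ mutInfo P' (fun x2 => W1 x1' x2) :=
    mutInfo_nonneg _ _ hP' (fun a b => (hW1 x1' a).1 b)
  refine ⟨(0, min y (mutInfo P' (fun x2 => W1 x1' x2))), ?_, ?_⟩
  · apply subset_convexHull
    have hQmem : (fun x1 x2 => (if x1 = x1' then 1 else 0) * P' x2) ∈
        {P : X1 → X2 → ℝ | ∃ P1 P2, IsDist P1 ∧ IsDist P2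
          ∧ P = fun x1 x2 => P1 x1 * P2 x2} :=
      ⟨fun x1 => if x1 = x1' then 1 else 0, P', isDist_delta x1', hP', rfl⟩
    exact Set.mem_biUnion hQmem
      ⟨le_refl 0, hQ12nn, le_min hy0 hmutnn, (min_le_right _ _).trans_eq hQ21.symm⟩
  · have hd : dist (((0:ℝ), y) : ℝ × ℝ)
        ((0, min y (mutInfo P' (fun x2 => W1 x1' x2))) : ℝ × ℝ)
        = |y - min y (mutInfo P' (fun x2 => W1 x1' x2))| := by
      rw [Prod.dist_eq]
      simp [Real.dist_eq]
    rw [hd, abs_of_nonneg (by simp [min_le_left])]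
    have h1 : y - δ/2 < min y (mutInfo P' (fun x2 => W1 x1' x2)) :=
      lt_min (by linarith) hI
    linarith


/-- the simple outer bound. C_O is contained in the closed convex hull of
the union over (R₁',R₂') ∈ C_I of {(R₁',R₂')} ∪ {(R₁'+α*, R₂'+2β*)}, intersected with
the trivial outer bound [0,I*₁] × [0,I*₂]. -/
theorem stmt7 [Nonempty X1] [Nonempty X2]
    (W1 : X1 → X2 → Y1 → ℝ) (W2 : X1 → X2 → Y2 → ℝ)
    (hW1 : ∀ x1 x2, IsDist (W1 x1 x2)) (hW2 : ∀ x1 x2, IsDist (W2 x1 x2)) :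
    outerBound W1 W2 ⊆
      closure (convexHull ℝ (⋃ r ∈ innerBound W1 W2,
        (({r} : Set (ℝ × ℝ)) ∪ {(r.1 + alphaStar W2, r.2 + 2 * betaStar W1)}))) ∩
      (Set.Icc 0 (IStar1 W2) ×ˢ Set.Icc 0 (IStar2 W1)) := by
  classical
  intro z hz
  rw [outerBound] at hz
  obtain ⟨P, hPj, hz⟩ := Set.mem_iUnion₂.mp hz
  rw [Set.mem_setOf_eq] at hPj
  obtain ⟨hz1, hz2, hz3, hz4⟩ := hz
  have hY2 : Nonempty Y2 := by
    by_contra h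
    rw [not_nonempty_iff] at h
    have := (hW2 (Classical.arbitrary X1) (Classical.arbitrary X2)).2
    rw [Finset.univ_eq_empty, Finset.sum_empty] at this
    norm_num at this
  have hY1 : Nonempty Y1 := by
    by_contra h
    rw [not_nonempty_iff] at h
    have := (hW1 (Classical.arbitrary X1) (Classical.arbitrary X2)).2
    rw [Finset.univ_eq_empty, Finset.sum_empty] at this
    norm_num at this
  have hm1 : IsDist (margin1 P) := margin1_isDist P hPj
  have hm2 : IsDist (margin2 P) := margin2_isDist P hPj
  have hI1bdd : BddAbove {I | ∃ (x2 : X2) (P0 : X1 → ℝ), IsDist P0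
      ∧ I = mutInfo P0 (fun x1 => W2 x1 x2)} := by
    refine ⟨Real.logb 2 (Fintype.card Y2), ?_⟩
    rintro I ⟨x2, P0, hP0, rfl⟩
    exact mutInfo_le_log_card P0 _ hP0 (fun a => hW2 a x2)
  have hmutI1 : ∀ (x2 : X2) (P0 : X1 → ℝ), IsDist P0 →
      mutInfo P0 (fun x1 => W2 x1 x2) ≤ IStar1 W2 :=
    fun x2 P0 h => le_csSup hI1bdd ⟨x2, P0, h, rfl⟩
  have hI2bdd : BddAbove {I | ∃ (x1 : X1) (P0 : X2 → ℝ), IsDist P0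
      ∧ I = mutInfo P0 (fun x2 => W1 x1 x2)} := by
    refine ⟨Real.logb 2 (Fintype.card Y1), ?_⟩
    rintro I ⟨x1, P0, hP0, rfl⟩
    exact mutInfo_le_log_card P0 _ hP0 (fun a => hW1 x1 a)
  have hmutI2 : ∀ (x1 : X1) (P0 : X2 → ℝ), IsDist P0 →
      mutInfo P0 (fun x2 => W1 x1 x2) ≤ IStar2 W1 :=
    fun x1 P0 h => le_csSup hI2bdd ⟨x1, P0, h, rfl⟩
  have hc12 : condMI12 P W2 ≤ IStar1 W2 := by
    rw [condMI12]
    calc ∑ x2, margin2 P x2 * mutInfo (cond1given2 P x2) (fun x1 => W2 x1 x2)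
        ≤ ∑ x2, margin2 P x2 * IStar1 W2 := by
          apply Finset.sum_le_sum
          intro x2 _
          by_cases h : margin2 P x2 = 0
          · rw [h, zero_mul, zero_mul]
          · exact mul_le_mul_of_nonneg_left
              (hmutI1 x2 _ (cond1given2_isDist P hPj x2 h)) (hm2.1 x2)
      _ = IStar1 W2 := by rw [← Finset.sum_mul, hm2.2, one_mul]
  have hc21 : condMI21 P W1 ≤ IStar2 W1 := by
    rw [condMI21]
    calc ∑ x1, margin1 P x1 * mutInfo (cond2given1 P x1) (fun x2 => W1 x1 x2)
        ≤ ∑ x1, margin1 P x1 * IStar2 W1 := by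
          apply Finset.sum_le_sum
          intro x1 _
          by_cases h : margin1 P x1 = 0
          · rw [h, zero_mul, zero_mul]
          · exact mul_le_mul_of_nonneg_left
              (hmutI2 x1 _ (cond2given1_isDist P hPj x1 h)) (hm1.1 x1)
      _ = IStar2 W1 := by rw [← Finset.sum_mul, hm1.2, one_mul]
  have hzI1 : z.1 ≤ IStar1 W2 := le_trans hz2 hc12
  have hzI2 : z.2 ≤ IStar2 W1 := le_trans hz4 hc21
  constructor
  swap
  · exact Set.mem_prod.mpr ⟨Set.mem_Icc.mpr ⟨hz1, hzI1⟩, Set.mem_Icc.mpr ⟨hz3, hzI2⟩⟩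
  have hβbdd : BddAbove {b | ∃ (P0 : X2 → ℝ) (x1 x1' : X1), IsDist P0 ∧ x1 ≠ x1' ∧
      b = |mutInfo P0 (fun x2 => W1 x1 x2) - mutInfo P0 (fun x2 => W1 x1' x2)|} := by
    refine ⟨Real.logb 2 (Fintype.card Y1), ?_⟩
    rintro b ⟨P0, x1, x1', hP0, hne, rfl⟩
    have h1 := mutInfo_nonneg P0 _ hP0 (fun a b => (hW1 x1 a).1 b)
    have h2 := mutInfo_nonneg P0 _ hP0 (fun a b => (hW1 x1' a).1 b)
    have h3 := mutInfo_le_log_card P0 _ hP0 (fun a => hW1 x1 a)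
    have h4 := mutInfo_le_log_card P0 _ hP0 (fun a => hW1 x1' a)
    rw [abs_le]
    exact ⟨by linarith, by linarith⟩
  have hβnn : 0 ≤ betaStar W1 := by
    apply Real.sSup_nonneg
    rintro b ⟨P0, x1, x1', hP0, hne, rfl⟩
    exact abs_nonneg _
  have hβdiff : ∀ (P0 : X2 → ℝ), IsDist P0 → ∀ x1 x1' : X1,
      mutInfo P0 (fun x2 => W1 x1 x2) - mutInfo P0 (fun x2 => W1 x1' x2)
        ≤ betaStar W1 := by
    intro P0 h x1 x1'
    by_cases hx : x1 = x1'
    · subst hx; rw [sub_self]; exact hβnn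
    · exact le_trans (le_abs_self _) (le_csSup hβbdd ⟨P0, x1, x1', h, hx, rfl⟩)
  have hcapbdd : ∀ x2 : X2, BddAbove {I | ∃ P0 : X1 → ℝ, IsDist P0
      ∧ I = mutInfo P0 (fun x1 => W2 x1 x2)} := by
    intro x2
    refine ⟨Real.logb 2 (Fintype.card Y2), ?_⟩
    rintro I ⟨P0, hP0, rfl⟩
    exact mutInfo_le_log_card P0 _ hP0 (fun a => hW2 a x2)
  have hcapub : ∀ (x2 : X2) (P0 : X1 → ℝ), IsDist P0 →
      mutInfo P0 (fun x1 => W2 x1 x2) ≤ capAt W2 x2 :=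
    fun x2 P0 h => le_csSup (hcapbdd x2) ⟨P0, h, rfl⟩
  have hαnn : 0 ≤ alphaStar W2 := by
    apply Real.sInf_nonneg
    rintro a ⟨Pt, hPt, rfl⟩
    exact Real.iSup_nonneg fun x2 => abs_nonneg _
  rw [Metric.mem_closure_iff]
  intro ε hε
  have hαne : {a | ∃ Pt : X1 → ℝ, IsDist Pt ∧
      a = ⨆ x2, |mutInfo Pt (fun x1 => W2 x1 x2) - capAt W2 x2|}.Nonempty :=
    ⟨_, fun _ => (Fintype.card X1 : ℝ)⁻¹, isDist_unif, rfl⟩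
  have hαbddb : BddBelow {a | ∃ Pt : X1 → ℝ, IsDist Pt ∧
      a = ⨆ x2, |mutInfo Pt (fun x1 => W2 x1 x2) - capAt W2 x2|} := by
    refine ⟨0, ?_⟩
    rintro a ⟨Pt, hPt, rfl⟩
    exact Real.iSup_nonneg fun x2 => abs_nonneg _
  have hαlt : sInf {a | ∃ Pt : X1 → ℝ, IsDist Pt ∧
      a = ⨆ x2, |mutInfo Pt (fun x1 => W2 x1 x2) - capAt W2 x2|}
      < alphaStar W2 + ε/2 := by
    show alphaStar W2 < _
    linarith
  obtain ⟨a, haS, halt⟩ := (csInf_lt_iff hαbddb hαne).mp hαlt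
  obtain ⟨Pt, hPt, rfl⟩ := haS
  have hcapPt : ∀ x2 : X2, capAt W2 x2
      ≤ mutInfo Pt (fun x1 => W2 x1 x2) + (alphaStar W2 + ε/2) := by
    intro x2
    have h1 : |mutInfo Pt (fun x1 => W2 x1 x2) - capAt W2 x2|
        ≤ ⨆ x2, |mutInfo Pt (fun x1 => W2 x1 x2) - capAt W2 x2| :=
      le_ciSup (f := fun x2 => |mutInfo Pt (fun x1 => W2 x1 x2) - capAt W2 x2|)
        (Set.Finite.bddAbove (Set.finite_range _)) x2
    have h2 := abs_le.mp (le_of_lt (lt_of_le_of_lt h1 halt))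
    linarith [h2.1]
  set A1 := ∑ x2, margin2 P x2 * mutInfo Pt (fun x1 => W2 x1 x2) with hA1def
  set A2 := ∑ x1, Pt x1 * mutInfo (margin2 P) (fun x2 => W1 x1 x2) with hA2def
  have hA1eq : condMI12 (fun x1 x2 => Pt x1 * margin2 P x2) W2 = A1 :=
    condMI12_prod W2 Pt (margin2 P) hPt.2
  have hA2eq : condMI21 (fun x1 x2 => Pt x1 * margin2 P x2) W1 = A2 :=
    condMI21_prod W1 Pt (margin2 P) hm2.2
  have hA1nn : 0 ≤ A1 := Finset.sum_nonneg fun x2 _ => mul_nonneg (hm2.1 x2)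
    (mutInfo_nonneg Pt _ hPt (fun a b => (hW2 a x2).1 b))
  have hA2nn : 0 ≤ A2 := Finset.sum_nonneg fun x1 _ => mul_nonneg (hPt.1 x1)
    (mutInfo_nonneg _ _ hm2 (fun a b => (hW1 x1 a).1 b))
  have hB1 : z.1 ≤ A1 + (alphaStar W2 + ε/2) := by
    refine le_trans hz2 ?_
    rw [condMI12]
    calc ∑ x2, margin2 P x2 * mutInfo (cond1given2 P x2) (fun x1 => W2 x1 x2)
        ≤ ∑ x2, (margin2 P x2 * mutInfo Pt (fun x1 => W2 x1 x2)
            + margin2 P x2 * (alphaStar W2 + ε/2)) := by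
          apply Finset.sum_le_sum
          intro x2 _
          by_cases h : margin2 P x2 = 0
          · rw [h]; simp
          · have hd := cond1given2_isDist P hPj x2 h
            have h1 := hcapub x2 _ hd
            have h2 := hcapPt x2
            calc margin2 P x2 * mutInfo (cond1given2 P x2) (fun x1 => W2 x1 x2)
                ≤ margin2 P x2 * (mutInfo Pt (fun x1 => W2 x1 x2)
                    + (alphaStar W2 + ε/2)) :=
                  mul_le_mul_of_nonneg_left (by linarith) (hm2.1 x2)
              _ = _ := by ring
      _ = A1 + (alphaStar W2 + ε/2) := by
          rw [Finset.sum_add_distrib, ← Finset.sum_mul, hm2.2, one_mul]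
  set x1s := Classical.arbitrary X1 with hx1s
  have hstep1 : condMI21 P W1 ≤ (∑ x1, margin1 P x1 *
      mutInfo (cond2given1 P x1) (fun x2 => W1 x1s x2)) + betaStar W1 := by
    rw [condMI21]
    calc ∑ x1, margin1 P x1 * mutInfo (cond2given1 P x1) (fun x2 => W1 x1 x2)
        ≤ ∑ x1, (margin1 P x1 * mutInfo (cond2given1 P x1) (fun x2 => W1 x1s x2)
            + margin1 P x1 * betaStar W1) := by
          apply Finset.sum_le_sum
          intro x1 _
          by_cases h : margin1 P x1 = 0
          · rw [h]; simp
          · have hd := cond2given1_isDist P hPj x1 h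
            have h1 := hβdiff _ hd x1 x1s
            calc margin1 P x1 * mutInfo (cond2given1 P x1) (fun x2 => W1 x1 x2)
                ≤ margin1 P x1 * (mutInfo (cond2given1 P x1) (fun x2 => W1 x1s x2)
                    + betaStar W1) :=
                  mul_le_mul_of_nonneg_left (by linarith) (hm1.1 x1)
              _ = _ := by ring
      _ = _ := by rw [Finset.sum_add_distrib, ← Finset.sum_mul, hm1.2, one_mul]
  have hstep2 : (∑ x1, margin1 P x1 *
      mutInfo (cond2given1 P x1) (fun x2 => W1 x1s x2))
      ≤ mutInfo (margin2 P) (fun x2 => W1 x1s x2) := by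
    have h := mutInfo_mix (margin1 P) (fun x1 => cond2given1 P x1)
      (fun x2 => W1 x1s x2) hm1.1 hm1.2
      (fun x1 x2 => cond2given1_nonneg P hPj x1 x2)
      (fun a b => (hW1 x1s a).1 b)
    have hmixeq : (fun x2 => ∑ x1, margin1 P x1 * cond2given1 P x1 x2)
        = margin2 P := by
      funext x2; exact mix_cond2given1 P hPj x2
    rwa [hmixeq] at h
  have hstep3 : mutInfo (margin2 P) (fun x2 => W1 x1s x2) ≤ A2 + betaStar W1 := by
    calc mutInfo (margin2 P) (fun x2 => W1 x1s x2)
        = ∑ x1, Pt x1 * mutInfo (margin2 P) (fun x2 => W1 x1s x2) := by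
          rw [← Finset.sum_mul, hPt.2, one_mul]
      _ ≤ ∑ x1, Pt x1 * (mutInfo (margin2 P) (fun x2 => W1 x1 x2) + betaStar W1) := by
          apply Finset.sum_le_sum
          intro x1 _
          have h1 := hβdiff (margin2 P) hm2 x1s x1
          exact mul_le_mul_of_nonneg_left (by linarith) (hPt.1 x1)
      _ = A2 + betaStar W1 := by
          simp only [mul_add]
          rw [Finset.sum_add_distrib, ← Finset.sum_mul, hPt.2, one_mul]
  have hB2 : z.2 ≤ A2 + 2 * betaStar W1 := by
    linarith [hz4, hstep1, hstep2, hstep3]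
  set S := (⋃ r ∈ innerBound W1 W2,
    (({r} : Set (ℝ × ℝ)) ∪ {(r.1 + alphaStar W2, r.2 + 2 * betaStar W1)})) with hS
  have hIBsub : innerBound W1 W2 ⊆ convexHull ℝ S := by
    intro r hr
    exact subset_convexHull ℝ S (Set.mem_biUnion hr (Set.mem_union_left _ rfl))
  have hQmem : (fun x1 x2 => Pt x1 * margin2 P x2) ∈
      {P : X1 → X2 → ℝ | ∃ P1 P2, IsDist P1 ∧ IsDist P2
        ∧ P = fun x1 x2 => P1 x1 * P2 x2} :=
    ⟨Pt, margin2 P, hPt, hm2, rfl⟩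
  have hRQinner : rateRegion W1 W2 (fun x1 x2 => Pt x1 * margin2 P x2)
      ⊆ innerBound W1 W2 :=
    fun q hq => subset_closure (subset_convexHull ℝ _ (Set.mem_biUnion hQmem hq))
  have hu0inner : ((A1, A2) : ℝ × ℝ) ∈ innerBound W1 W2 :=
    hRQinner ⟨hA1nn, hA1eq.ge, hA2nn, hA2eq.ge⟩
  have hu0C : ((A1, A2) : ℝ × ℝ) ∈ convexHull ℝ S := hIBsub hu0inner
  have hu1C : ((A1 + alphaStar W2, A2 + 2 * betaStar W1) : ℝ × ℝ)
      ∈ convexHull ℝ S := by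
    apply subset_convexHull ℝ S
    exact Set.mem_biUnion hu0inner (Set.mem_union_right _ rfl)
  have hCvx : Convex ℝ (convexHull ℝ S) := convex_convexHull ℝ S
  have hhoriz : ∀ x' : ℝ, 0 ≤ x' → x' ≤ IStar1 W2 →
      ((x', (0:ℝ)) : ℝ × ℝ) ∈ convexHull ℝ S :=
    fun x' h1 h2 => hIBsub (mem_inner_horiz W1 W2 hW1 hW2 h1 h2)
  have hvert : ∀ y' : ℝ, 0 ≤ y' → y' ≤ IStar2 W1 →
      (((0:ℝ), y') : ℝ × ℝ) ∈ convexHull ℝ S :=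
    fun y' h1 h2 => hIBsub (mem_inner_vert W1 W2 hW1 hW2 h1 h2)
  set x := min z.1 (A1 + alphaStar W2) with hxdef
  have hx0 : 0 ≤ x := le_min hz1 (by linarith)
  have hxA : x ≤ A1 + alphaStar W2 := min_le_right _ _
  have hxI1 : x ≤ IStar1 W2 := le_trans (min_le_left _ _) hzI1
  have hy0 : 0 ≤ z.2 := hz3
  have caseC : ∀ s : ℝ, 0 ≤ s → s ≤ 1 → A2 + s * (2 * betaStar W1) = z.2 →
      x ≤ A1 + s * alphaStar W2 → ((x, z.2) : ℝ × ℝ) ∈ convexHull ℝ S := by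
    intro s hs0 hs1 hsy hxs
    have hp0 := convex_comb2 hCvx hu1C hu0C hs0 hs1
    have hp : ((A1 + s * alphaStar W2, z.2) : ℝ × ℝ) ∈ convexHull ℝ S := by
      have he : ((A1 + s * alphaStar W2, z.2) : ℝ × ℝ)
          = (s * (A1 + alphaStar W2) + (1 - s) * A1,
             s * (A2 + 2 * betaStar W1) + (1 - s) * A2) := by
        rw [Prod.mk.injEq]
        constructor
        · ring
        · linear_combination -hsy
      rw [he]; exact hp0
    rcases eq_or_lt_of_le (show (0:ℝ) ≤ A1 + s * alphaStar W2 from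
        add_nonneg hA1nn (mul_nonneg hs0 hαnn)) with h0 | h0
    · have hxz : x = 0 := le_antisymm (by linarith) hx0
      rw [show ((x, z.2) : ℝ × ℝ) = ((0:ℝ), z.2) from by rw [hxz]]
      exact hvert z.2 hy0 hzI2
    · have hq := hvert z.2 hy0 hzI2
      have hcc := convex_comb2 hCvx hp hq (div_nonneg hx0 h0.le)
        ((div_le_one h0).mpr hxs)
      have he : ((x, z.2) : ℝ × ℝ)
          = (x / (A1 + s * alphaStar W2) * (A1 + s * alphaStar W2)
              + (1 - x / (A1 + s * alphaStar W2)) * 0,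
             x / (A1 + s * alphaStar W2) * z.2
              + (1 - x / (A1 + s * alphaStar W2)) * z.2) := by
        rw [Prod.mk.injEq]
        constructor
        · rw [div_mul_cancel₀ _ (ne_of_gt h0)]; ring
        · ring
      rw [he]; exact hcc
  have hxy : ((x, z.2) : ℝ × ℝ) ∈ convexHull ℝ S := by
    by_cases hxA1 : x ≤ A1
    · by_cases hyA2 : z.2 ≤ A2
      · exact hIBsub (hRQinner ⟨hx0, hxA1.trans hA1eq.ge, hy0, hyA2.trans hA2eq.ge⟩)
      · push_neg at hyA2
        have h2β : 0 < 2 * betaStar W1 := by linarith [hB2]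
        refine caseC ((z.2 - A2) / (2 * betaStar W1))
          (div_nonneg (by linarith) h2β.le)
          ((div_le_one h2β).mpr (by linarith)) ?_ ?_
        · rw [div_mul_cancel₀ _ (ne_of_gt h2β)]; ring
        · have h5 : 0 ≤ (z.2 - A2) / (2 * betaStar W1) * alphaStar W2 :=
            mul_nonneg (div_nonneg (by linarith) h2β.le) hαnn
          linarith
    · push_neg at hxA1
      have hα : 0 < alphaStar W2 := by linarith [hxA]
      set t := (x - A1) / alphaStar W2 with htdef
      have ht0 : 0 ≤ t := div_nonneg (by linarith) hα.le
      have ht1 : t ≤ 1 := (div_le_one hα).mpr (by linarith)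
      have htx : A1 + t * alphaStar W2 = x := by
        rw [htdef, div_mul_cancel₀ _ (ne_of_gt hα)]; ring
      by_cases hyt : z.2 ≤ A2 + t * (2 * betaStar W1)
      · have hp0 := convex_comb2 hCvx hu1C hu0C ht0 ht1
        have hp : ((x, A2 + t * (2 * betaStar W1)) : ℝ × ℝ) ∈ convexHull ℝ S := by
          have he : ((x, A2 + t * (2 * betaStar W1)) : ℝ × ℝ)
              = (t * (A1 + alphaStar W2) + (1 - t) * A1,
                 t * (A2 + 2 * betaStar W1) + (1 - t) * A2) := by
            rw [Prod.mk.injEq]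
            constructor
            · linear_combination -htx
            · ring
          rw [he]; exact hp0
        have hq := hhoriz x hx0 hxI1
        have hyt0 : 0 ≤ A2 + t * (2 * betaStar W1) :=
          add_nonneg hA2nn (mul_nonneg ht0 (by linarith))
        rcases eq_or_lt_of_le hyt0 with h0 | h0
        · have hyz : z.2 = 0 := le_antisymm (by linarith) hy0
          rw [show ((x, z.2) : ℝ × ℝ) = ((x, (0:ℝ)) : ℝ × ℝ) from by rw [hyz]]
          exact hq
        · have hcc := convex_comb2 hCvx hp hq (div_nonneg hy0 h0.le)
            ((div_le_one h0).mpr hyt)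
          have he : ((x, z.2) : ℝ × ℝ)
              = (z.2 / (A2 + t * (2 * betaStar W1)) * x
                  + (1 - z.2 / (A2 + t * (2 * betaStar W1))) * x,
                 z.2 / (A2 + t * (2 * betaStar W1)) * (A2 + t * (2 * betaStar W1))
                  + (1 - z.2 / (A2 + t * (2 * betaStar W1))) * 0) := by
            rw [Prod.mk.injEq]
            constructor
            · ring
            · rw [div_mul_cancel₀ _ (ne_of_gt h0)]; ring
          rw [he]; exact hcc
      · push_neg at hyt
        have htβ : 0 ≤ t * (2 * betaStar W1) := mul_nonneg ht0 (by linarith)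
        have hyA2 : A2 < z.2 := by linarith
        have h2β : 0 < 2 * betaStar W1 := by linarith [hB2]
        refine caseC ((z.2 - A2) / (2 * betaStar W1))
          (div_nonneg (by linarith) h2β.le)
          ((div_le_one h2β).mpr (by linarith [hB2])) ?_ ?_
        · rw [div_mul_cancel₀ _ (ne_of_gt h2β)]; ring
        · have hts : t ≤ (z.2 - A2) / (2 * betaStar W1) := by
            rw [le_div_iff₀ h2β]
            linarith [hyt]
          have h6 : t * alphaStar W2 ≤ (z.2 - A2) / (2 * betaStar W1) * alphaStar W2 :=
            mul_le_mul_of_nonneg_right hts hα.le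
          linarith [htx]
  refine ⟨(x, z.2), hxy, ?_⟩
  rw [Prod.dist_eq]
  have hxle : z.1 - x ≤ ε/2 := by
    rcases le_total z.1 (A1 + alphaStar W2) with h | h
    · rw [hxdef, min_eq_left h]; linarith
    · rw [hxdef, min_eq_right h]; linarith [hB1]
  have hd1 : dist z.1 x < ε := by
    rw [Real.dist_eq, abs_of_nonneg (sub_nonneg.mpr (by rw [hxdef]; exact min_le_left _ _))]
    linarith
  have hd2 : dist z.2 ((x, z.2) : ℝ × ℝ).2 < ε := by simpa using hε
  exact max_lt hd1 hd2


end TWC
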